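/- Let ĝ_U, ĝ_C be ℝ^n-valued random vectors with E[⟨ĝ_U, ĝ_C⟩] = 0, and let f ∈ [0,1]^n be a (possibly random, measurable w.r.t. (ĝ_U, ĝ_C)) vector satisfying: fᵢ > 1/2 iff ĝ_{U,i}ĝ_{C,i} > 0, fᵢ < 1/2 if ĝ_{U,i}ĝ_{C,i} < 0, fᵢ = 1/2 if ĝ_{U,i}ĝ_{C,i} = 0. Then for any α, β > 0, the update Δ = -f ⊙ (αĝ_U + βĝ_C) satisfies E[⟨Δ, ĝ_C⟩] ≤ 0 and E[⟨Δ, ĝ_U⟩] ≤ 0. -/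

import Mathlib

/-!
Pointwise, `f - 1/2` has the sign of `ĝ_U ĝ_C`, so `f ĝ_U ĝ_C ≥ ĝ_U ĝ_C / 2`; taking expectations
and using `E⟨ĝ_U, ĝ_C⟩ = 0` gives `E[∑ f ĝ_U ĝ_C] ≥ 0`. Each of the two inner products of the
update is minus a nonnegative combination of this cross term and of `E[∑ f ĝ²] ≥ 0`.
-/

open MeasureTheory

lemma half_mul_le_mul_of_sign {K : Type*} [Field K] [LinearOrder K] [IsStrictOrderedRing K]
    {t p : K} (hpos : 0 < p → 1 / 2 < t) (hneg : p < 0 → t < 1 / 2) : 1 / 2 * p ≤ t * p := by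
  rcases lt_trichotomy p 0 with hp | rfl | hp
  · exact mul_le_mul_of_nonpos_right (hneg hp).le hp.le
  · simp
  · exact mul_le_mul_of_nonneg_right (hpos hp).le hp.le

section Integral

variable {Ω : Type*} [MeasurableSpace Ω] {μ : Measure Ω}

lemma integral_nonneg_of_const_mul_le {g h : Ω → ℝ} {c : ℝ} (hg : Integrable g μ)
    (hh : Integrable h μ) (hg0 : ∫ ω, g ω ∂μ = 0) (hle : ∀ᵐ ω ∂μ, c * g ω ≤ h ω) :
    0 ≤ ∫ ω, h ω ∂μ :=
  calc 0 = ∫ ω, c * g ω ∂μ := by rw [integral_const_mul, hg0, mul_zero]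
    _ ≤ ∫ ω, h ω ∂μ := integral_mono_ae (hg.const_mul c) hh hle

lemma integral_neg_add_nonpos {X Y : Ω → ℝ} {α β : ℝ} (hX : Integrable X μ)
    (hY : Integrable Y μ) (hα : 0 ≤ α) (hβ : 0 ≤ β) (hX0 : 0 ≤ ∫ ω, X ω ∂μ)
    (hY0 : 0 ≤ ∫ ω, Y ω ∂μ) :
    ∫ ω, -(α * X ω + β * Y ω) ∂μ ≤ 0 := by
  rw [integral_neg, integral_add (hX.const_mul α) (hY.const_mul β), integral_const_mul,
    integral_const_mul, neg_nonpos]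
  exact add_nonneg (mul_nonneg hα hX0) (mul_nonneg hβ hY0)

end Integral

theorem stmt_12_general {n : ℕ} {Ω : Type*} [MeasurableSpace Ω]
    (P : Measure Ω)
    (ghatU ghatC f : Ω → Fin n → ℝ)
    (hf01 : ∀ ω i, f ω i ∈ Set.Icc (0:ℝ) 1)
    (h1 : ∀ ω i, f ω i > 1 / 2 ↔ 0 < ghatU ω i * ghatC ω i)
    (h2 : ∀ ω i, ghatU ω i * ghatC ω i < 0 → f ω i < 1 / 2)
    (horth : ∫ ω, (∑ i, ghatU ω i * ghatC ω i) ∂P = 0)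
    (α β : ℝ) (hα : 0 < α) (hβ : 0 < β)
    (hint0 : Integrable (fun ω => ∑ i, ghatU ω i * ghatC ω i) P)
    (hint1 : Integrable (fun ω => ∑ i, f ω i * (ghatU ω i * ghatC ω i)) P)
    (hint2 : Integrable (fun ω => ∑ i, f ω i * ghatU ω i ^ 2) P)
    (hint3 : Integrable (fun ω => ∑ i, f ω i * ghatC ω i ^ 2) P) :
    (∫ ω, ∑ i, (-(f ω i * (α * ghatU ω i + β * ghatC ω i))) * ghatC ω i ∂P ≤ 0) ∧
    (∫ ω, ∑ i, (-(f ω i * (α * ghatU ω i + β * ghatC ω i))) * ghatU ω i ∂P ≤ 0) := by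
  have hcross : 0 ≤ ∫ ω, ∑ i, f ω i * (ghatU ω i * ghatC ω i) ∂P :=
    integral_nonneg_of_const_mul_le (c := 1 / 2) hint0 hint1 horth <| .of_forall fun ω => by
      rw [Finset.mul_sum]
      exact Finset.sum_le_sum fun i _ => half_mul_le_mul_of_sign (h1 ω i).mpr (h2 ω i)
  have hsq (g : Ω → Fin n → ℝ) : 0 ≤ ∫ ω, ∑ i, f ω i * g ω i ^ 2 ∂P :=
    integral_nonneg fun ω => Finset.sum_nonneg fun i _ => mul_nonneg (hf01 ω i).1 (sq_nonneg _)
  constructor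
  · calc _ = ∫ ω, -(α * ∑ i, f ω i * (ghatU ω i * ghatC ω i)
              + β * ∑ i, f ω i * ghatC ω i ^ 2) ∂P := by
          congr 1 with ω
          simp only [Finset.mul_sum, ← Finset.sum_add_distrib, ← Finset.sum_neg_distrib]
          exact Finset.sum_congr rfl fun i _ => by ring
      _ ≤ 0 := integral_neg_add_nonpos hint1 hint3 hα.le hβ.le hcross (hsq ghatC)
  · calc _ = ∫ ω, -(β * ∑ i, f ω i * (ghatU ω i * ghatC ω i)
              + α * ∑ i, f ω i * ghatU ω i ^ 2) ∂P := by
          congr 1 with ω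
          simp only [Finset.mul_sum, ← Finset.sum_add_distrib, ← Finset.sum_neg_distrib]
          exact Finset.sum_congr rfl fun i _ => by ring
      _ ≤ 0 := integral_neg_add_nonpos hint1 hint2 hβ.le hα.le hcross (hsq ghatU)

/-- Focus update's theoretical guarantee: feasibility in expectation. -/
theorem stmt_12 {n : ℕ} {Ω : Type*} [MeasurableSpace Ω]
    (P : Measure Ω) [IsProbabilityMeasure P]
    (ghatU ghatC f : Ω → Fin n → ℝ)
    (hf01 : ∀ ω i, f ω i ∈ Set.Icc (0:ℝ) 1)
    (h1 : ∀ ω i, f ω i > 1 / 2 ↔ 0 < ghatU ω i * ghatC ω i)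
    (h2 : ∀ ω i, ghatU ω i * ghatC ω i < 0 → f ω i < 1 / 2)
    (h3 : ∀ ω i, ghatU ω i * ghatC ω i = 0 → f ω i = 1 / 2)
    (horth : ∫ ω, (∑ i, ghatU ω i * ghatC ω i) ∂P = 0)
    (α β : ℝ) (hα : 0 < α) (hβ : 0 < β)
    (hint0 : Integrable (fun ω => ∑ i, ghatU ω i * ghatC ω i) P)
    (hint1 : Integrable (fun ω => ∑ i, f ω i * (ghatU ω i * ghatC ω i)) P)
    (hint2 : Integrable (fun ω => ∑ i, f ω i * ghatU ω i ^ 2) P)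
    (hint3 : Integrable (fun ω => ∑ i, f ω i * ghatC ω i ^ 2) P) :
    (∫ ω, ∑ i, (-(f ω i * (α * ghatU ω i + β * ghatC ω i))) * ghatC ω i ∂P ≤ 0) ∧
    (∫ ω, ∑ i, (-(f ω i * (α * ghatU ω i + β * ghatC ω i))) * ghatU ω i ∂P ≤ 0) :=
  stmt_12_general P ghatU ghatC f hf01 h1 h2 horth α β hα hβ hint0 hint1 hint2 hint3
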